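/- Let P = (V, ≤) be a finite poset of dimension at most d with realizer ≤_1, …, ≤_d, and let G be the incomparability graph of P. Let I be an irredundant set of G with |I| ≥ 3d and border T(I) = (t_1, …, t_{3d}). Then there exists an upward extension of I that is a minimal dominating set of G if and only if there exists a tuple (w_1, …, w_{3d}) with w_i ∈ priv(I, t_i) for every i ∈ {1,…,3d} such that V ∖ N[I] ⊆ N[U(I) ∖ N[{w_1, …, w_{3d}}]], i.e., the set U(I) ∖ N[{w_1, …, w_{3d}}] dominates all vertices of G outside N[I]. -/

import Mathlib

open Set

/-- The closed neighborhood `N[v]` of a vertex. -/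
def closedNbhd {V : Type*} (G : SimpleGraph V) (v : V) : Set V :=
  insert v (G.neighborSet v)

/-- The closed neighborhood `N[S]` of a set of vertices. -/
def closedNbhdSet {V : Type*} (G : SimpleGraph V) (S : Set V) : Set V :=
  ⋃ v ∈ S, closedNbhd G v

/-- `D` is a dominating set of `G`. -/
def IsDomSet {V : Type*} (G : SimpleGraph V) (D : Set V) : Prop :=
  ∀ w, w ∈ closedNbhdSet G D

/-- `D` is a minimal dominating set of `G`. -/
def IsMinDomSet {V : Type*} (G : SimpleGraph V) (D : Set V) : Prop :=
  IsDomSet G D ∧ ∀ D' ⊂ D, ¬ IsDomSet G D'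

/-- The set `priv(D, u)` of private neighbors of `u` with respect to `D`:
vertices `v` with `N[v] ∩ D = {u}`. -/
def privSet {V : Type*} (G : SimpleGraph V) (D : Set V) (u : V) : Set V :=
  {v | closedNbhd G v ∩ D = {u}}

/-- The incomparability graph of a poset: distinct vertices are adjacent iff incomparable. -/
def incompGraph (V : Type*) [PartialOrder V] : SimpleGraph V :=
  SimpleGraph.fromRel (fun x y => ¬ x ≤ y ∧ ¬ y ≤ x)

/-- `a : Fin d → V` is the (first) layer of `S` with respect to the linear orders `lin`:
`a i` is the maximum, with respect to the `i`-th linear order, of `S` minus the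
previously chosen entries `a j`, `j < i`. -/
def IsLayer {V : Type*} {d : ℕ} (lin : Fin d → LinearOrder V) (S : Set V)
    (a : Fin d → V) : Prop :=
  ∀ i : Fin d, a i ∈ S \ (a '' {j | j < i}) ∧
    ∀ y ∈ S \ (a '' {j | j < i}), (lin i).le y (a i)

/-!
Forward direction: the private neighbours of the border with respect to a minimal dominating
upward extension `D` are private with respect to `I`, and no vertex of `D ∖ I` can lie in their
closed neighbourhoods.

Backward direction: choose `X ⊆ U(I) ∖ N[w₁, …, w₃d]` inclusion-minimal among the sets dominating
`V ∖ N[I]`. Then `I ∪ X` is a minimal dominating set as soon as every `u ∈ I` has a private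
neighbour (with respect to `I`) whose closed neighbourhood misses `X`. For border vertices this is
`wᵢ`; for the others any private neighbour `w` works. The reason is a pigeonhole bound: at most
`d` vertices of `I` can have a private neighbour below a common vertex `z` without lying below `z`
themselves, because each of them is then strictly below all the others in some coordinate. A
vertex `v ∈ X` lies above the private neighbours `w_b`, `w_c` of the second and third layer (it
misses them and is above `I` in some coordinate). If `u ≰ v`, the `2d` vertices of these layers
violate the bound with `z = u`; if `u ≤ v` and `v ∈ N[w]`, some vertex of the third layer together
with the second layer violates it with `z = v`.
-/

open Function

section Domination

variable {V : Type*} {G : SimpleGraph V}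

lemma mem_closedNbhd {x y : V} : x ∈ closedNbhd G y ↔ x = y ∨ G.Adj y x := by
  simp [closedNbhd]

lemma mem_closedNbhd_self (x : V) : x ∈ closedNbhd G x :=
  mem_insert x _

lemma mem_closedNbhd_comm {x y : V} : x ∈ closedNbhd G y ↔ y ∈ closedNbhd G x := by
  simp only [mem_closedNbhd, G.adj_comm, eq_comm]

lemma mem_closedNbhdSet {x : V} {S : Set V} :
    x ∈ closedNbhdSet G S ↔ ∃ y ∈ S, x ∈ closedNbhd G y := by
  simp [closedNbhdSet]

lemma closedNbhd_subset_closedNbhdSet {y : V} {S : Set V} (hy : y ∈ S) :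
    closedNbhd G y ⊆ closedNbhdSet G S :=
  subset_biUnion_of_mem hy

lemma closedNbhdSet_mono {S T : Set V} (h : S ⊆ T) : closedNbhdSet G S ⊆ closedNbhdSet G T :=
  biUnion_subset_biUnion_left h

lemma mem_privSet {D : Set V} {u x : V} :
    x ∈ privSet G D u ↔ (u ∈ closedNbhd G x ∧ u ∈ D) ∧ ∀ y ∈ closedNbhd G x ∩ D, y = u :=
  eq_singleton_iff_unique_mem

lemma eq_of_mem_privSet {D : Set V} {u x y : V} (hx : x ∈ privSet G D u)
    (hy : y ∈ closedNbhd G x) (hyD : y ∈ D) : y = u :=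
  (mem_privSet.1 hx).2 y ⟨hy, hyD⟩

lemma privSet_subset_privSet {I D : Set V} (hID : I ⊆ D) {u : V} (hu : u ∈ I) :
    privSet G D u ⊆ privSet G I u := fun _ hx =>
  mem_privSet.2 ⟨⟨(mem_privSet.1 hx).1.1, hu⟩, fun _ hy => eq_of_mem_privSet hx hy.1 (hID hy.2)⟩

theorem isMinDomSet_iff {D : Set V} :
    IsMinDomSet G D ↔ IsDomSet G D ∧ ∀ u ∈ D, (privSet G D u).Nonempty := by
  refine ⟨fun ⟨hdom, hmin⟩ => ⟨hdom, fun u hu => ?_⟩, fun ⟨hdom, hpriv⟩ => ⟨hdom, ?_⟩⟩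
  · by_contra hempty
    refine hmin (D \ {u}) (sdiff_singleton_ssubset.2 hu) fun x => ?_
    by_contra hx
    refine hempty ⟨x, mem_privSet.2 ⟨⟨?_, hu⟩, fun y ⟨hyx, hyD⟩ => ?_⟩⟩
    · obtain ⟨y, hyD, hxy⟩ := mem_closedNbhdSet.1 (hdom x)
      obtain rfl : y = u := by_contra fun hyu => hx (mem_closedNbhdSet.2 ⟨y, ⟨hyD, hyu⟩, hxy⟩)
      exact mem_closedNbhd_comm.1 hxy
    · by_contra hyu
      exact hx (mem_closedNbhdSet.2 ⟨y, ⟨hyD, hyu⟩, mem_closedNbhd_comm.1 hyx⟩)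
  · intro D' hD'D hdom'
    obtain ⟨u, huD, huD'⟩ := exists_of_ssubset hD'D
    obtain ⟨x, hx⟩ := hpriv u huD
    obtain ⟨y, hyD', hxy⟩ := mem_closedNbhdSet.1 (hdom' x)
    exact huD' (eq_of_mem_privSet hx (mem_closedNbhd_comm.1 hxy) (hD'D.subset hyD') ▸ hyD')

lemma IsDomSet.mem_closedNbhdSet_diff {D I W : Set V} (hdom : IsDomSet G D)
    (hW : ∀ w ∈ W, ∃ u ∈ I, w ∈ privSet G D u) {x : V} (hx : x ∉ closedNbhdSet G I) :
    x ∈ closedNbhdSet G ((D \ I) \ closedNbhdSet G W) := by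
  obtain ⟨y, hyD, hxy⟩ := mem_closedNbhdSet.1 (hdom x)
  have hyI : y ∉ I := fun hyI => hx (mem_closedNbhdSet.2 ⟨y, hyI, hxy⟩)
  refine mem_closedNbhdSet.2 ⟨y, ⟨⟨hyD, hyI⟩, fun hyW => ?_⟩, hxy⟩
  obtain ⟨w, hwW, hyw⟩ := mem_closedNbhdSet.1 hyW
  obtain ⟨u, huI, hw⟩ := hW w hwW
  exact hyI (eq_of_mem_privSet hw hyw hyD ▸ huI)

theorem exists_isMinDomSet_union [Finite V] {I X₀ : Set V}
    (hpriv : ∀ u ∈ I, ∃ w ∈ privSet G I u, Disjoint (closedNbhd G w) X₀)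
    (hcov : ∀ x ∉ closedNbhdSet G I, x ∈ closedNbhdSet G X₀) :
    ∃ X ⊆ X₀, IsMinDomSet G (I ∪ X) := by
  obtain ⟨X, hXX₀, hXcov, hXmin⟩ := exists_minimal_le_of_wellFoundedLT
    (fun X => ∀ x ∉ closedNbhdSet G I, x ∈ closedNbhdSet G X) X₀ hcov
  refine ⟨X, hXX₀, isMinDomSet_iff.2 ⟨fun x => ?_, ?_⟩⟩
  · by_cases hx : x ∈ closedNbhdSet G I
    · exact closedNbhdSet_mono subset_union_left hx
    · exact closedNbhdSet_mono subset_union_right (hXcov x hx)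
  rintro u (hu | hu)
  · obtain ⟨w, hw, hwX₀⟩ := hpriv u hu
    have hwX : closedNbhd G w ∩ X = ∅ := (hwX₀.mono_right hXX₀).inter_eq
    refine ⟨w, show closedNbhd G w ∩ (I ∪ X) = {u} from ?_⟩
    rwa [inter_union_distrib_left, hwX, union_empty]
  · obtain ⟨x, hxI, hxX⟩ : ∃ x ∉ closedNbhdSet G I, x ∉ closedNbhdSet G (X \ {u}) := by
      by_contra! h
      exact (hXmin h sdiff_subset hu).2 rfl
    refine ⟨x, mem_privSet.2 ⟨⟨?_, Or.inr hu⟩, ?_⟩⟩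
    · obtain ⟨y, hyX, hxy⟩ := mem_closedNbhdSet.1 (hXcov x hxI)
      obtain rfl : y = u := by_contra fun hyu => hxX (mem_closedNbhdSet.2 ⟨y, ⟨hyX, hyu⟩, hxy⟩)
      exact mem_closedNbhd_comm.1 hxy
    · rintro y ⟨hyx, hyI | hyX⟩
      · exact (hxI (mem_closedNbhdSet.2 ⟨y, hyI, mem_closedNbhd_comm.1 hyx⟩)).elim
      · by_contra hyu
        exact hxX (mem_closedNbhdSet.2 ⟨y, ⟨hyX, hyu⟩, mem_closedNbhd_comm.1 hyx⟩)

end Domination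

namespace IsLayer

variable {V : Type*} {d : ℕ} {lin : Fin d → LinearOrder V} {S : Set V} {f : Fin d → V}

lemma mem (hf : IsLayer lin S f) (i : Fin d) : f i ∈ S :=
  (hf i).1.1

lemma injective (hf : IsLayer lin S f) : Injective f := by
  intro i j hij
  by_contra hne
  rcases lt_or_gt_of_ne hne with h | h
  · exact (hf j).1.2 ⟨i, h, hij⟩
  · exact (hf i).1.2 ⟨j, h, hij.symm⟩

lemma le_of_notMem_range (hf : IsLayer lin S f) {y : V} (hy : y ∈ S) (hyf : y ∉ range f)
    (i : Fin d) : (lin i).le y (f i) :=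
  (hf i).2 y ⟨hy, fun ⟨j, _, hj⟩ => hyf ⟨j, hj⟩⟩

end IsLayer

section Incomparability

variable {V : Type*} [PartialOrder V]

lemma incompGraph_adj {x y : V} : (incompGraph V).Adj x y ↔ ¬ x ≤ y ∧ ¬ y ≤ x := by
  simp only [incompGraph, SimpleGraph.fromRel_adj]
  refine ⟨fun h => h.2.elim id (fun h' => h'.symm), fun h => ⟨?_, Or.inl h⟩⟩
  rintro rfl
  exact h.1 le_rfl

lemma mem_closedNbhd_incompGraph {x y : V} :
    x ∈ closedNbhd (incompGraph V) y ↔ ¬ x < y ∧ ¬ y < x := by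
  rw [mem_closedNbhd, incompGraph_adj, lt_iff_le_and_ne, lt_iff_le_and_ne]
  grind

lemma notMem_closedNbhd_incompGraph {x y : V} :
    x ∉ closedNbhd (incompGraph V) y ↔ x < y ∨ y < x := by
  rw [mem_closedNbhd_incompGraph, not_and_or, not_not, not_not]

lemma lt_or_lt_of_mem_privSet {I : Set V} {t w x : V} (hw : w ∈ privSet (incompGraph V) I t)
    (hx : x ∈ I) (hxt : x ≠ t) : x < w ∨ w < x :=
  notMem_closedNbhd_incompGraph.1 fun hxw => hxt (eq_of_mem_privSet hw hxw hx)

end Incomparability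

section Realizer

variable {V : Type*} [PartialOrder V] {d : ℕ} {lin : Fin d → LinearOrder V}

def IsRealizer (lin : Fin d → LinearOrder V) : Prop :=
  ∀ x y : V, x ≤ y ↔ ∀ i, (lin i).le x y

theorem card_le_of_privSet_le (hreal : IsRealizer lin)
    {κ : Type*} [Fintype κ] {I : Set V} {t w : κ → V} (ht : Injective t) (htI : ∀ k, t k ∈ I)
    (hw : ∀ k, w k ∈ privSet (incompGraph V) I (t k)) {z : V}
    (htz : ∀ k, ¬ t k ≤ z) (hwz : ∀ k, w k ≤ z) : Fintype.card κ ≤ d := by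
  have hcoord : ∀ k, ∃ i, ¬ (lin i).le (w k) (t k) ∧ ∀ k' ≠ k, (lin i).le (w k) (t k') := by
    intro k
    have hwt : ¬ w k ≤ t k := fun h => htz k <|
      (h.eq_or_lt.resolve_right (mem_closedNbhd_incompGraph.1 (mem_privSet.1 (hw k)).1.1).2) ▸ hwz k
    obtain ⟨i, hi⟩ := not_forall.1 (mt (hreal _ _).2 hwt)
    refine ⟨i, hi, fun k' hk' => ?_⟩
    rcases lt_or_lt_of_mem_privSet (hw k) (htI k') (ht.ne hk') with h | h
    · exact absurd (h.le.trans (hwz k)) (htz k')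
    · exact (hreal _ _).1 h.le i
  -- in coordinate `s k`, the vertex `t k` lies strictly below every other `t k'`
  choose s hs using hcoord
  have hs_inj : Injective s := by
    intro k k' hkk'
    by_contra hne
    obtain ⟨hk, hk_le⟩ := hs k
    obtain ⟨hk', hk'_le⟩ := hs k'
    rw [← hkk'] at hk' hk'_le
    have h := ((lin (s k)).le_total _ _).resolve_left hk'
    exact hk ((lin (s k)).le_trans _ _ _ (hk_le k' (Ne.symm hne))
      ((lin (s k)).le_trans _ _ _ h (hk'_le k hne)))
  simpa using Fintype.card_le_of_injective s hs_inj

lemma not_le_of_lt_max (hreal : IsRealizer lin) {I : Set V} {i : Fin d} {m v : V}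
    (hm : ∀ y ∈ I, (lin i).le y m)
    (hv : (lin i).lt m v) : ∀ x ∈ I, ¬ v ≤ x := fun x hx hvx =>
  (((lin i).lt_iff_le_not_ge _ _).1 hv).2 ((lin i).le_trans _ _ _ ((hreal _ _).1 hvx i) (hm x hx))

lemma le_of_notMem_closedNbhd_privSet (hreal : IsRealizer lin)
    {I : Set V} {t w v : V} (hw : w ∈ privSet (incompGraph V) I t)
    (ht : ∀ i, ∃ x ∈ I, x ≠ t ∧ (lin i).le t x) (hv : ∀ x ∈ I, ¬ v ≤ x)
    (hvw : v ∉ closedNbhd (incompGraph V) w) : w ≤ v := by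
  refine ((notMem_closedNbhd_incompGraph.1 hvw).resolve_left fun hvw => ?_).le
  have htw : ¬ t ≤ w := fun htw => by
    rcases htw.eq_or_lt with rfl | htw
    · exact hv t (mem_privSet.1 hw).1.2 hvw.le
    · exact (mem_closedNbhd_incompGraph.1 (mem_privSet.1 hw).1.1).1 htw
  obtain ⟨ρ, hρ⟩ := not_forall.1 (mt (hreal _ _).2 htw)
  obtain ⟨x, hxI, hxt, htx⟩ := ht ρ
  rcases lt_or_lt_of_mem_privSet hw hxI hxt with hxw | hwx
  · exact hρ ((lin ρ).le_trans _ _ _ htx ((hreal _ _).1 hxw.le ρ))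
  · exact hv x hxI (hvw.trans hwx).le

lemma le_of_privSet_layers_le_of_notMem_border (hreal : IsRealizer lin)
    {I : Set V} {a b c wb wc : Fin d → V}
    (hb : IsLayer lin (I \ range a) b) (hc : IsLayer lin (I \ (range a ∪ range b)) c)
    (hwb : ∀ j, wb j ∈ privSet (incompGraph V) I (b j))
    (hwc : ∀ j, wc j ∈ privSet (incompGraph V) I (c j))
    {u v : V} (hu : u ∈ I \ (range a ∪ range b)) (huc : u ∉ range c) (hd : 0 < d)
    (hbv : ∀ j, wb j ≤ v) (hcv : ∀ j, wc j ≤ v) : u ≤ v := by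
  by_contra huv
  have hw_le : ∀ {t w : V}, w ∈ privSet (incompGraph V) I t → t ≠ u → w ≤ v → w ≤ u :=
    fun hw htu hwv =>
      ((lt_or_lt_of_mem_privSet hw hu.1 htu.symm).resolve_left fun h => huv (h.le.trans hwv)).le
  have ht_not_le : ∀ {t : V} {j : Fin d}, (lin j).le u t → t ≠ u → ¬ t ≤ u :=
    fun hut htu h => htu ((lin _).le_antisymm _ _ ((hreal _ _).1 h _) hut)
  have hub : ∀ j, b j ≠ u := fun j h => hu.2 (Or.inr ⟨j, h⟩)
  have huc' : ∀ j, c j ≠ u := fun j h => huc ⟨j, h⟩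
  have hub_le := hb.le_of_notMem_range ⟨hu.1, fun h => hu.2 (Or.inl h)⟩ fun h => hu.2 (Or.inr h)
  have huc_le := hc.le_of_notMem_range hu huc
  have := card_le_of_privSet_le hreal (t := Sum.elim b c) (w := Sum.elim wb wc) (z := u)
    (hb.injective.sumElim hc.injective fun i j h => (hc.mem j).2 (Or.inr ⟨i, h⟩))
    (Sum.forall.2 ⟨fun j => (hb.mem j).1, fun j => (hc.mem j).1⟩) (Sum.forall.2 ⟨hwb, hwc⟩)
    (Sum.forall.2 ⟨fun j => ht_not_le (hub_le j) (hub j), fun j => ht_not_le (huc_le j) (huc' j)⟩)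
    (Sum.forall.2 ⟨fun j => hw_le (hwb j) (hub j) (hbv j), fun j => hw_le (hwc j) (huc' j) (hcv j)⟩)
  simp only [Fintype.card_sum, Fintype.card_fin] at this
  omega

lemma notMem_closedNbhd_privSet_of_le (hreal : IsRealizer lin)
    {I : Set V} {a b c wb wc : Fin d → V}
    (hb : IsLayer lin (I \ range a) b) (hc : IsLayer lin (I \ (range a ∪ range b)) c)
    (hwb : ∀ j, wb j ∈ privSet (incompGraph V) I (b j))
    (hwc : ∀ j, wc j ∈ privSet (incompGraph V) I (c j))
    {u v w : V} (hu : u ∈ I \ (range a ∪ range b)) (huc : u ∉ range c)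
    (hw : w ∈ privSet (incompGraph V) I u) (hvI : v ∉ I) (huv : u ≤ v)
    (hbv : ∀ j, wb j ≤ v) (hcv : ∀ j, wc j ≤ v) : v ∉ closedNbhd (incompGraph V) w := by
  intro hvw
  have huv' : u < v := huv.lt_of_ne fun h => hvI (h ▸ hu.1)
  obtain ⟨huw, hwu⟩ := mem_closedNbhd_incompGraph.1 (mem_privSet.1 hw).1.1
  obtain ⟨-, hwv⟩ := mem_closedNbhd_incompGraph.1 hvw
  have hwI : w ∉ I := fun hwI => by
    obtain rfl := eq_of_mem_privSet hw (mem_closedNbhd_self w) hwI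
    exact hwv huv'
  have hwv : ¬ w ≤ v := fun h => hwv (h.lt_of_ne fun h' => huw (h' ▸ huv'))
  have huw : ¬ u ≤ w := fun h => huw (h.lt_of_ne fun h' => hwI (h' ▸ hu.1))
  obtain ⟨r, hr⟩ := not_forall.1 (mt (hreal _ _).2 huw)
  have hcr : c r ∈ I \ range a ∧ c r ∉ range b :=
    ⟨⟨(hc.mem r).1, fun h => (hc.mem r).2 (Or.inl h)⟩, fun h => (hc.mem r).2 (Or.inr h)⟩
  have hwcr : w < c r :=
    (lt_or_lt_of_mem_privSet hw (hc.mem r).1 fun h => huc ⟨r, h⟩).resolve_left fun h =>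
      hr ((lin r).le_trans _ _ _ (hc.le_of_notMem_range hu huc r) ((hreal _ _).1 h.le r))
  have hb_not_le : ∀ j, ¬ b j ≤ v := fun j hbv => by
    rcases lt_or_lt_of_mem_privSet hw (hb.mem j).1 fun h => hu.2 (Or.inr ⟨j, h⟩) with h | h
    · exact hcr.2 ⟨j, (lin j).le_antisymm _ _ ((hreal _ _).1 (h.trans hwcr).le j)
        (hb.le_of_notMem_range hcr.1 hcr.2 j)⟩
    · exact hwv (h.le.trans hbv)
  have := card_le_of_privSet_le hreal (t := Fin.cons (c r) b) (w := Fin.cons (wc r) wb) (z := v)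
    (Fin.cons_injective_iff.2 ⟨hcr.2, hb.injective⟩)
    (Fin.forall_fin_succ.2 ⟨(hc.mem r).1, fun j => (hb.mem j).1⟩)
    (Fin.forall_fin_succ.2 ⟨hwc r, hwb⟩)
    (Fin.forall_fin_succ.2 ⟨fun h => hwv (hwcr.le.trans h), hb_not_le⟩)
    (Fin.forall_fin_succ.2 ⟨hcv r, hbv⟩)
  simp at this

theorem notMem_closedNbhd_of_notMem_border (hreal : IsRealizer lin)
    {I : Set V} {a b c wb wc : Fin d → V} (ha : IsLayer lin I a)
    (hb : IsLayer lin (I \ range a) b) (hc : IsLayer lin (I \ (range a ∪ range b)) c)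
    (hwb : ∀ j, wb j ∈ privSet (incompGraph V) I (b j))
    (hwc : ∀ j, wc j ∈ privSet (incompGraph V) I (c j))
    {u v w : V} (hu : u ∈ I \ (range a ∪ range b)) (huc : u ∉ range c)
    (hw : w ∈ privSet (incompGraph V) I u) (hvI : v ∉ I) (hv : ∀ x ∈ I, ¬ v ≤ x)
    (hvb : ∀ j, v ∉ closedNbhd (incompGraph V) (wb j))
    (hvc : ∀ j, v ∉ closedNbhd (incompGraph V) (wc j)) :
    v ∉ closedNbhd (incompGraph V) w := by
  have hbelow_a : ∀ {t}, t ∈ I \ range a → ∀ i, ∃ x ∈ I, x ≠ t ∧ (lin i).le t x :=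
    fun ht i => ⟨a i, ha.mem i, fun h => ht.2 ⟨i, h⟩, ha.le_of_notMem_range ht.1 ht.2 i⟩
  have hbv : ∀ j, wb j ≤ v := fun j =>
    le_of_notMem_closedNbhd_privSet hreal (hwb j) (hbelow_a (hb.mem j)) hv (hvb j)
  have hcv : ∀ j, wc j ≤ v := fun j =>
    le_of_notMem_closedNbhd_privSet hreal (hwc j)
      (hbelow_a ⟨(hc.mem j).1, fun h => (hc.mem j).2 (Or.inl h)⟩) hv (hvc j)
  obtain ⟨i, -⟩ := not_forall.1 (mt (hreal _ _).2 (hv u hu.1))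
  exact notMem_closedNbhd_privSet_of_le hreal hb hc hwb hwc hu huc hw hvI
    (le_of_privSet_layers_le_of_notMem_border hreal hb hc hwb hwc hu huc i.pos hbv hcv) hbv hcv

theorem exists_privSet_disjoint_closedNbhd (hreal : IsRealizer lin)
    {I : Set V} (hirr : ∀ x ∈ I, privSet (incompGraph V) I x ≠ ∅) {a b c wa wb wc : Fin d → V}
    (ha : IsLayer lin I a) (hb : IsLayer lin (I \ range a) b)
    (hc : IsLayer lin (I \ (range a ∪ range b)) c)
    (hwa : ∀ j, wa j ∈ privSet (incompGraph V) I (a j))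
    (hwb : ∀ j, wb j ∈ privSet (incompGraph V) I (b j))
    (hwc : ∀ j, wc j ∈ privSet (incompGraph V) I (c j))
    {X : Set V} (hX : ∀ v ∈ X, v ∉ I ∧ ∀ x ∈ I, ¬ v ≤ x) :
    ∀ u ∈ I, ∃ w ∈ privSet (incompGraph V) I u, Disjoint (closedNbhd (incompGraph V) w)
      (X \ closedNbhdSet (incompGraph V) (range wa ∪ range wb ∪ range wc)) := by
  set W := range wa ∪ range wb ∪ range wc
  have hW : ∀ w ∈ W, Disjoint (closedNbhd (incompGraph V) w) (X \ closedNbhdSet _ W) :=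
    fun w hw => disjoint_sdiff_right.mono_left (closedNbhd_subset_closedNbhdSet hw)
  intro u hu
  by_cases hua : u ∈ range a
  · obtain ⟨i, rfl⟩ := hua
    exact ⟨wa i, hwa i, hW _ (Or.inl (Or.inl ⟨i, rfl⟩))⟩
  by_cases hub : u ∈ range b
  · obtain ⟨i, rfl⟩ := hub
    exact ⟨wb i, hwb i, hW _ (Or.inl (Or.inr ⟨i, rfl⟩))⟩
  by_cases huc : u ∈ range c
  · obtain ⟨i, rfl⟩ := huc
    exact ⟨wc i, hwc i, hW _ (Or.inr ⟨i, rfl⟩)⟩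
  obtain ⟨w, hw⟩ := nonempty_iff_ne_empty.2 (hirr u hu)
  refine ⟨w, hw, disjoint_left.2 fun v hvw hv => ?_⟩
  exact notMem_closedNbhd_of_notMem_border hreal ha hb hc hwb hwc ⟨hu, fun h => h.elim hua hub⟩
    huc hw (hX v hv.1).1 (hX v hv.1).2
    (fun j hj => hv.2 (closedNbhd_subset_closedNbhdSet (S := W) (Or.inl (Or.inr ⟨j, rfl⟩)) hj))
    (fun j hj => hv.2 (closedNbhd_subset_closedNbhdSet (S := W) (Or.inr ⟨j, rfl⟩) hj)) hvw

end Realizer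

theorem stmt3_general {V : Type*} [Fintype V] [PartialOrder V] (d : ℕ)
    (lin : Fin d → LinearOrder V)
    (hreal : ∀ x y : V, x ≤ y ↔ ∀ i : Fin d, (lin i).le x y)
    (I : Set V)
    (hirr : ∀ x ∈ I, privSet (incompGraph V) I x ≠ ∅)
    (m : Fin d → V)
    (hm : ∀ i : Fin d, m i ∈ I ∧ ∀ y ∈ I, (lin i).le y (m i))
    (U : Set V) (hU : U = {v : V | v ∉ I ∧ ∃ i : Fin d, (lin i).lt (m i) v})
    (a b c : Fin d → V)
    (ha : IsLayer lin I a)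
    (hb : IsLayer lin (I \ Set.range a) b)
    (hc : IsLayer lin (I \ (Set.range a ∪ Set.range b)) c) :
    (∃ D : Set V, I ⊆ D ∧ D \ I ⊆ U ∧ IsMinDomSet (incompGraph V) D) ↔
    (∃ wa wb wc : Fin d → V,
      (∀ i, wa i ∈ privSet (incompGraph V) I (a i)) ∧
      (∀ i, wb i ∈ privSet (incompGraph V) I (b i)) ∧
      (∀ i, wc i ∈ privSet (incompGraph V) I (c i)) ∧
      ∀ x : V, x ∉ closedNbhdSet (incompGraph V) I →
        x ∈ closedNbhdSet (incompGraph V)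
          (U \ closedNbhdSet (incompGraph V)
            (Set.range wa ∪ Set.range wb ∪ Set.range wc))) := by
  constructor
  · rintro ⟨D, hID, hDU, hmin⟩
    obtain ⟨hdom, hpriv⟩ := isMinDomSet_iff.1 hmin
    choose! w hw using fun u (hu : u ∈ I) => hpriv u (hID hu)
    have haI := ha.mem
    have hbI i := (hb.mem i).1
    have hcI i := (hc.mem i).1
    refine ⟨w ∘ a, w ∘ b, w ∘ c, fun i => privSet_subset_privSet hID (haI i) (hw _ (haI i)),
      fun i => privSet_subset_privSet hID (hbI i) (hw _ (hbI i)),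
      fun i => privSet_subset_privSet hID (hcI i) (hw _ (hcI i)),
      fun x hx => closedNbhdSet_mono (sdiff_subset_sdiff_left hDU)
        (hdom.mem_closedNbhdSet_diff ?_ hx)⟩
    rintro _ ((⟨i, rfl⟩ | ⟨i, rfl⟩) | ⟨i, rfl⟩)
    exacts [⟨a i, haI i, hw _ (haI i)⟩, ⟨b i, hbI i, hw _ (hbI i)⟩, ⟨c i, hcI i, hw _ (hcI i)⟩]
  · rintro ⟨wa, wb, wc, hwa, hwb, hwc, hcov⟩
    have hUI : ∀ v ∈ U, v ∉ I ∧ ∀ x ∈ I, ¬ v ≤ x := by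
      rw [hU]
      rintro v ⟨hvI, i, hi⟩
      exact ⟨hvI, not_le_of_lt_max hreal (hm i).2 hi⟩
    obtain ⟨X, hXU, hmin⟩ := exists_isMinDomSet_union
      (exists_privSet_disjoint_closedNbhd hreal hirr ha hb hc hwa hwb hwc hUI) hcov
    exact ⟨I ∪ X, subset_union_left, fun v hv => (hXU (hv.1.resolve_left hv.2)).1, hmin⟩

/-- Theorem (bt-extension): let `P` be a finite poset realized by the linear orders
`lin 1, …, lin d`, let `G` be its incomparability graph, let `I` be an irredundant set
of `G` with `|I| ≥ 3d`, with layers `a`, `b`, `c` forming the border `T(I)`, where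
`m i` is the maximum of `I` in the `i`-th order and
`U(I) = {v ∉ I : m i <_i v for some i}`.  Then `I` has an upward extension which is a
minimal dominating set of `G` iff there is a tuple of private neighbors
`w₁ ∈ priv(I,t₁), …, w₃d ∈ priv(I,t₃d)` of the border such that
`U(I) ∖ N[w₁,…,w₃d]` dominates every vertex outside `N[I]`. -/
theorem stmt3 {V : Type*} [Fintype V] [PartialOrder V] (d : ℕ)
    (lin : Fin d → LinearOrder V)
    (hreal : ∀ x y : V, x ≤ y ↔ ∀ i : Fin d, (lin i).le x y)
    (I : Set V)
    (hirr : ∀ x ∈ I, privSet (incompGraph V) I x ≠ ∅)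
    (hcard : 3 * d ≤ I.ncard)
    (m : Fin d → V)
    (hm : ∀ i : Fin d, m i ∈ I ∧ ∀ y ∈ I, (lin i).le y (m i))
    (U : Set V) (hU : U = {v : V | v ∉ I ∧ ∃ i : Fin d, (lin i).lt (m i) v})
    (a b c : Fin d → V)
    (ha : IsLayer lin I a)
    (hb : IsLayer lin (I \ Set.range a) b)
    (hc : IsLayer lin (I \ (Set.range a ∪ Set.range b)) c) :
    (∃ D : Set V, I ⊆ D ∧ D \ I ⊆ U ∧ IsMinDomSet (incompGraph V) D) ↔
    (∃ wa wb wc : Fin d → V,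
      (∀ i, wa i ∈ privSet (incompGraph V) I (a i)) ∧
      (∀ i, wb i ∈ privSet (incompGraph V) I (b i)) ∧
      (∀ i, wc i ∈ privSet (incompGraph V) I (c i)) ∧
      ∀ x : V, x ∉ closedNbhdSet (incompGraph V) I →
        x ∈ closedNbhdSet (incompGraph V)
          (U \ closedNbhdSet (incompGraph V)
            (Set.range wa ∪ Set.range wb ∪ Set.range wc))) :=
  stmt3_general d lin hreal I hirr m hm U hU a b c ha hb hc
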